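/- For every x ∈ (0,1), φ(πx) = (log 2)/(πx) − (1/π)·∫₀^∞ (log(cosh(x·y)) / x) · (1/sinh²(y)) dy; in particular the integral on the right-hand side converges. (Equivalently, the function φ̃(x) := φ(πx) − (log 2)/(πx) satisfies φ̃(x) = −(1/π)·∫₀^∞ (log(cosh(x·y))/x)·csch²(y) dy.) -/

import Mathlib

open Real Set MeasureTheory

/-- `φ(θ) = ∫₀^∞ sinh((π−θ)ξ) / (sinh(πξ)·cosh(θξ)) dξ`. -/
noncomputable def phi (θ : ℝ) : ℝ :=
  ∫ ξ in Ioi (0:ℝ), Real.sinh ((π - θ) * ξ) / (Real.sinh (π * ξ) * Real.cosh (θ * ξ))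

/-!
After the substitution `ξ = y / π`, `φ(πx) = π⁻¹ ∫₀^∞ sinh((1-x)y) / (sinh y cosh(xy)) dy`.
Both this integrand and `log(cosh(xy))/x · csch² y` are nonnegative for `0 < x < 1`, and their
sum is the derivative of `G(y) = y - coth y · log(cosh(xy))/x`. Since `G(0⁺) = 0` (L'Hôpital)
and `G(+∞) = log 2 / x` (because `log cosh t = t - log 2 + o(1)`), both integrals converge and
add up to `log 2 / x`.
-/

open Filter Topology

theorem integrableOn_Ioi_and_integral_add_of_hasDerivAt_add {G f g : ℝ → ℝ} {a l : ℝ}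
    (hcont : ContinuousWithinAt G (Ici a) a)
    (hderiv : ∀ y ∈ Ioi a, HasDerivAt G (f y + g y) y)
    (hf : ∀ y ∈ Ioi a, 0 ≤ f y) (hg : ∀ y ∈ Ioi a, 0 ≤ g y)
    (hfm : AEStronglyMeasurable f (volume.restrict (Ioi a)))
    (hG : Tendsto G atTop (𝓝 l)) :
    IntegrableOn f (Ioi a) ∧ (∫ y in Ioi a, f y) + ∫ y in Ioi a, g y = l - G a := by
  have hfg_nonneg : ∀ y ∈ Ioi a, 0 ≤ f y + g y := fun y hy => add_nonneg (hf y hy) (hg y hy)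
  have hfg : IntegrableOn (fun y => f y + g y) (Ioi a) :=
    integrableOn_Ioi_deriv_of_nonneg hcont hderiv hfg_nonneg hG
  have hfi : IntegrableOn f (Ioi a) := by
    refine Integrable.mono hfg hfm
      ((ae_restrict_iff' measurableSet_Ioi).2 (ae_of_all _ fun y hy => ?_))
    rw [norm_of_nonneg (hf y hy), norm_of_nonneg (hfg_nonneg y hy)]
    linarith [hg y hy]
  have hgi : IntegrableOn g (Ioi a) := (hfg.sub hfi).congr (ae_of_all _ fun y => by simp)
  refine ⟨hfi, ?_⟩
  rw [← integral_add hfi hgi]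
  exact integral_Ioi_of_hasDerivAt_of_nonneg hcont hderiv hfg_nonneg hG

theorem tendsto_log_cosh_sub_self_atTop :
    Tendsto (fun t => log (cosh t) - t) atTop (𝓝 (-log 2)) := by
  have hexp : Tendsto (fun t => (1 + exp (-(2 * t))) / 2) atTop (𝓝 ((1 + 0) / 2)) :=
    ((tendsto_exp_neg_atTop_nhds_zero.comp
      (tendsto_id.const_mul_atTop two_pos)).const_add 1).div_const 2
  have hlog := (continuousAt_log (by norm_num : ((1 : ℝ) + 0) / 2 ≠ 0)).tendsto.comp hexp
  rw [show ((1 : ℝ) + 0) / 2 = 2⁻¹ by norm_num, log_inv] at hlog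
  refine hlog.congr fun t => ?_
  have hcosh : cosh t = exp t * ((1 + exp (-(2 * t))) / 2) := by
    have : exp t * exp (-(2 * t)) = exp (-t) := by rw [← exp_add]; ring_nf
    rw [cosh_eq]
    linear_combination (-1 / 2 : ℝ) * this
  rw [Function.comp_apply, hcosh, log_mul (exp_ne_zero t) (by positivity), log_exp]
  ring

theorem tendsto_inv_sinh_atTop : Tendsto (fun y => (sinh y)⁻¹) atTop (𝓝 0) :=
  tendsto_inv_atTop_zero.comp <| tendsto_atTop_mono' atTop
    (eventually_ge_atTop 0 |>.mono fun _ hy => self_le_sinh_iff.2 hy) tendsto_id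

theorem cosh_div_sinh_sub_one {y : ℝ} (hy : y ≠ 0) :
    cosh y / sinh y - 1 = exp (-y) / sinh y := by
  rw [div_sub_one (sinh_ne_zero.2 hy), cosh_sub_sinh]

noncomputable def phiKernel (x y : ℝ) : ℝ := sinh ((1 - x) * y) / (sinh y * cosh (x * y))

noncomputable def logCoshKernel (x y : ℝ) : ℝ := log (cosh (x * y)) / x * (1 / sinh y ^ 2)

noncomputable def kernelPrimitive (x y : ℝ) : ℝ := y - cosh y / sinh y * (log (cosh (x * y)) / x)

theorem phi_pi_mul (x : ℝ) : phi (π * x) = π⁻¹ * ∫ y in Ioi 0, phiKernel x y := by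
  have hscale : ∀ ξ, sinh ((π - π * x) * ξ) / (sinh (π * ξ) * cosh (π * x * ξ)) =
      phiKernel x (π * ξ) := fun ξ => by unfold phiKernel; ring_nf
  simp only [phi, hscale, integral_comp_mul_left_Ioi (phiKernel x) 0 pi_pos, mul_zero,
    smul_eq_mul]

theorem phiKernel_nonneg {x y : ℝ} (hx : x ≤ 1) (hy : 0 ≤ y) : 0 ≤ phiKernel x y := by
  have := sinh_nonneg_iff.2 (mul_nonneg (sub_nonneg.2 hx) hy)
  have := sinh_nonneg_iff.2 hy
  unfold phiKernel
  positivity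

theorem logCoshKernel_nonneg {x : ℝ} (hx : 0 ≤ x) (y : ℝ) : 0 ≤ logCoshKernel x y := by
  have := log_nonneg (one_le_cosh (x * y))
  unfold logCoshKernel
  positivity

theorem measurable_logCoshKernel (x : ℝ) : Measurable (logCoshKernel x) := by
  unfold logCoshKernel
  fun_prop

theorem hasDerivAt_log_cosh_mul_div {x : ℝ} (hx : x ≠ 0) (y : ℝ) :
    HasDerivAt (fun y => log (cosh (x * y)) / x) (sinh (x * y) / cosh (x * y)) y := by
  refine ((((hasDerivAt_id y).const_mul x).cosh.log (cosh_pos _).ne').div_const x).congr_deriv ?_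
  simp only [id, mul_one]
  field_simp

theorem hasDerivAt_kernelPrimitive {x y : ℝ} (hx : x ≠ 0) (hy : y ≠ 0) :
    HasDerivAt (kernelPrimitive x) (logCoshKernel x y + phiKernel x y) y := by
  have hs : sinh y ≠ 0 := sinh_ne_zero.2 hy
  have hc : cosh (x * y) ≠ 0 := (cosh_pos _).ne'
  have hcoth := (hasDerivAt_cosh y).div (hasDerivAt_sinh y) hs
  refine ((hasDerivAt_id y).sub (hcoth.mul (hasDerivAt_log_cosh_mul_div hx y))).congr_deriv ?_
  simp only [logCoshKernel, phiKernel, Pi.div_apply]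
  rw [show (1 - x) * y = y - x * y by ring, sinh_sub]
  field_simp
  linear_combination cosh (x * y) * log (cosh (x * y)) * cosh_sq_sub_sinh_sq y

theorem tendsto_kernelPrimitive_nhdsGT_zero {x : ℝ} (hx : x ≠ 0) :
    Tendsto (kernelPrimitive x) (𝓝[>] 0) (𝓝 0) := by
  have hratio : Tendsto (fun y => log (cosh (x * y)) / x / sinh y) (𝓝[>] 0) (𝓝 0) := by
    refine HasDerivAt.lhopital_zero_nhdsGT
      (f' := fun y => sinh (x * y) / cosh (x * y)) (g' := cosh)
      (.of_forall (hasDerivAt_log_cosh_mul_div hx)) (.of_forall hasDerivAt_sinh)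
      (.of_forall fun y => (cosh_pos y).ne') ?_ ?_ ?_
    · simpa using (hasDerivAt_log_cosh_mul_div hx 0).continuousAt.tendsto.mono_left
        nhdsWithin_le_nhds
    · simpa using continuous_sinh.continuousAt.tendsto.mono_left (nhdsWithin_le_nhds (a := 0))
    · have hcosh_ne (t : ℝ) : cosh t ≠ 0 := (cosh_pos t).ne'
      have : Continuous fun y => sinh (x * y) / cosh (x * y) / cosh y :=
        ((by fun_prop : Continuous fun y => sinh (x * y)).div (by fun_prop)
          fun y => hcosh_ne _).div (by fun_prop) fun y => hcosh_ne y
      simpa using this.continuousAt.tendsto.mono_left (nhdsWithin_le_nhds (a := 0))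
  have hcosh : Tendsto cosh (𝓝[>] 0) (𝓝 1) := by
    simpa using continuous_cosh.continuousAt.tendsto.mono_left (nhdsWithin_le_nhds (a := 0))
  have hid : Tendsto id (𝓝[>] (0 : ℝ)) (𝓝 0) := tendsto_id.mono_left nhdsWithin_le_nhds
  have h := hid.sub (hcosh.mul hratio)
  rw [mul_zero, sub_zero] at h
  refine h.congr fun y => ?_
  simp only [kernelPrimitive, id]
  ring

theorem tendsto_kernelPrimitive_atTop {x : ℝ} (hx : 0 < x) :
    Tendsto (kernelPrimitive x) atTop (𝓝 (log 2 / x)) := by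
  have hye : Tendsto (fun y => y * exp (-y)) atTop (𝓝 0) := by
    simpa using tendsto_pow_mul_exp_neg_atTop_nhds_zero 1
  have hlog := tendsto_log_cosh_sub_self_atTop.comp (tendsto_id.const_mul_atTop hx)
  have h := (hye.neg.mul tendsto_inv_sinh_atTop).sub
    (((tendsto_exp_neg_atTop_nhds_zero.mul tendsto_inv_sinh_atTop).const_add 1).mul
      (hlog.div_const x))
  simp only [neg_zero, mul_zero, add_zero, one_mul, neg_div, sub_neg_eq_add, zero_add] at h
  refine h.congr' ((eventually_ne_atTop 0).mono fun y hy => ?_)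
  have hcoth : cosh y / sinh y = 1 + exp (-y) / sinh y := by
    rw [← cosh_div_sinh_sub_one hy]; ring
  simp only [Function.comp_apply, id, kernelPrimitive, hcoth]
  field_simp
  ring

-- `cosh 0 / sinh 0 = 0` by Lean's division convention; it is also the limit at `0⁺`.
theorem kernelPrimitive_zero (x : ℝ) : kernelPrimitive x 0 = 0 := by
  simp [kernelPrimitive]

theorem continuousWithinAt_kernelPrimitive_Ici_zero {x : ℝ} (hx : x ≠ 0) :
    ContinuousWithinAt (kernelPrimitive x) (Ici 0) 0 := by
  rw [← continuousWithinAt_Ioi_iff_Ici, ContinuousWithinAt, kernelPrimitive_zero]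
  exact tendsto_kernelPrimitive_nhdsGT_zero hx

theorem phi_eq_log2_sub_integral (x : ℝ) (hx : x ∈ Ioo (0:ℝ) 1) :
    IntegrableOn (fun y => (Real.log (Real.cosh (x * y)) / x) * (1 / (Real.sinh y) ^ 2))
      (Ioi (0:ℝ)) ∧
    phi (π * x) =
      Real.log 2 / (π * x) -
        (1 / π) * ∫ y in Ioi (0:ℝ),
          (Real.log (Real.cosh (x * y)) / x) * (1 / (Real.sinh y) ^ 2) := by
  obtain ⟨hx0, hx1⟩ := hx
  obtain ⟨hint, hsum⟩ := integrableOn_Ioi_and_integral_add_of_hasDerivAt_add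
    (continuousWithinAt_kernelPrimitive_Ici_zero hx0.ne')
    (fun y hy => hasDerivAt_kernelPrimitive hx0.ne' hy.ne')
    (fun y _ => logCoshKernel_nonneg hx0.le y) (fun y hy => phiKernel_nonneg hx1.le hy.le)
    (measurable_logCoshKernel x).aestronglyMeasurable (tendsto_kernelPrimitive_atTop hx0)
  rw [kernelPrimitive_zero, sub_zero] at hsum
  refine ⟨hint, ?_⟩
  rw [phi_pi_mul, eq_sub_of_add_eq' hsum]
  simp only [logCoshKernel]
  field_simp
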